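/- arXiv:math/0608645 — 6 statements merged into one kernel-verified Lean document; each statement's English description precedes it below -/
import Mathlib

section
/- For all positive integers a and b, l(a·b) ≤ 2·l(a)·l(b). -/
noncomputable def ell (g : ℕ) : ℕ :=
  sInf {k | ∃ a n : Fin k → ℕ, (∀ i, a i = 1 ∨ a i = 3) ∧ g = ∑ i, a i * 2 ^ n i}

noncomputable def obj (g : ℕ) : ℕ := g - ell g

def MyRepr (g k : ℕ) : Prop :=
  ∃ a n : Fin k → ℕ, (∀ i, a i = 1 ∨ a i = 3) ∧ g = ∑ i, a i * 2 ^ n i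

lemma repr_self (g : ℕ) : MyRepr g g :=
  ⟨fun _ => 1, fun _ => 0, fun _ => Or.inl rfl, by simp⟩

lemma repr_ell (g : ℕ) : MyRepr g (ell g) := by
  have h : {k | ∃ a n : Fin k → ℕ, (∀ i, a i = 1 ∨ a i = 3) ∧ g = ∑ i, a i * 2 ^ n i}.Nonempty :=
    ⟨g, repr_self g⟩
  exact Nat.sInf_mem h

lemma ell_le {g k : ℕ} (h : MyRepr g k) : ell g ≤ k := by exact Nat.sInf_le h

lemma repr_zero : MyRepr 0 0 := ⟨fun i => i.elim0, fun i => i.elim0, fun i => i.elim0, by simp⟩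

lemma repr_add {g h k m : ℕ} (hg : MyRepr g k) (hh : MyRepr h m) :
    MyRepr (g + h) (k + m) := by
  obtain ⟨a1, n1, ha1, hs1⟩ := hg
  obtain ⟨a2, n2, ha2, hs2⟩ := hh
  refine ⟨Fin.append a1 a2, Fin.append n1 n2, ?_, ?_⟩
  · intro i
    refine Fin.addCases (fun j => ?_) (fun j => ?_) i
    · simpa [Fin.append_left] using ha1 j
    · simpa [Fin.append_right] using ha2 j
  · rw [Fin.sum_univ_add]
    simp [Fin.append_left, Fin.append_right, hs1, hs2]

lemma repr_shift {g k : ℕ} (m : ℕ) (hg : MyRepr g k) : MyRepr (2 ^ m * g) k := by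
  obtain ⟨a, n, ha, hs⟩ := hg
  refine ⟨a, fun i => n i + m, ha, ?_⟩
  rw [hs, Finset.mul_sum]
  apply Finset.sum_congr rfl
  intro i _
  rw [pow_add]; ring

lemma repr_single {d : ℕ} (hd : d = 1 ∨ d = 3) (n : ℕ) : MyRepr (d * 2 ^ n) 1 :=
  ⟨fun _ => d, fun _ => n, fun _ => hd, by simp⟩

lemma repr_nine (n : ℕ) : MyRepr (9 * 2 ^ n) 2 := by
  refine ⟨![1, 1], ![n + 3, n], ?_, ?_⟩
  · intro i; fin_cases i <;> simp
  · rw [Fin.sum_univ_two]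
    simp [pow_add]; ring

lemma repr_zero_eq {g : ℕ} (h : MyRepr g 0) : g = 0 := by
  obtain ⟨a, n, _, hs⟩ := h
  simpa using hs

lemma repr_succ {g k : ℕ} (h : MyRepr g (k + 1)) :
    ∃ c n r, (c = 1 ∨ c = 3) ∧ MyRepr r k ∧ g = c * 2 ^ n + r := by
  obtain ⟨a, n, ha, hs⟩ := h
  refine ⟨a 0, n 0, ∑ i : Fin k, a i.succ * 2 ^ n i.succ,
    ha 0, ⟨fun i => a i.succ, fun i => n i.succ, fun i => ha i.succ, rfl⟩, ?_⟩
  rw [hs, Fin.sum_univ_succ]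

lemma repr_scale {c : ℕ} (hc : c = 1 ∨ c = 3) :
    ∀ l b : ℕ, MyRepr b l → ∃ s ≤ 2 * l, MyRepr (c * b) s := by
  intro l
  induction l with
  | zero =>
    intro b hb
    rw [repr_zero_eq hb]
    exact ⟨0, le_refl 0, by simpa using repr_zero⟩
  | succ l ih =>
    intro b hb
    obtain ⟨d, m, r, hd, hr, hbe⟩ := repr_succ hb
    obtain ⟨s, hs, hcr⟩ := ih r hr
    have hmul : ∃ t ≤ 2, MyRepr (c * d * 2 ^ m) t := by
      rcases hc with hc | hc <;> rcases hd with hd | hd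
      · exact ⟨1, by norm_num, by rw [hc, hd]; exact repr_single (Or.inl rfl) m⟩
      · exact ⟨1, by norm_num, by rw [hc, hd]; simpa using repr_single (Or.inr rfl) m⟩
      · exact ⟨1, by norm_num, by rw [hc, hd]; exact repr_single (Or.inr rfl) m⟩
      · exact ⟨2, le_refl 2, by rw [hc, hd]; exact repr_nine m⟩
    obtain ⟨t, ht, hct⟩ := hmul
    refine ⟨t + s, ?_, ?_⟩
    · omega
    · have : c * b = c * d * 2 ^ m + c * r := by rw [hbe]; ring
      rw [this]
      exact repr_add hct hcr

lemma repr_mul : ∀ k a, MyRepr a k → ∀ l b, MyRepr b l →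
    ∃ t ≤ 2 * k * l, MyRepr (a * b) t := by
  intro k
  induction k with
  | zero =>
    intro a ha l b _
    rw [repr_zero_eq ha]
    exact ⟨0, by omega, by simpa using repr_zero⟩
  | succ k ih =>
    intro a ha l b hb
    obtain ⟨c, n, r, hc, hr, hae⟩ := repr_succ ha
    obtain ⟨s, hs, hcs⟩ := repr_scale hc l b hb
    obtain ⟨t, ht, hct⟩ := ih r hr l b hb
    refine ⟨s + t, by nlinarith, ?_⟩
    have : a * b = 2 ^ n * (c * b) + r * b := by rw [hae]; ring
    rw [this]
    exact repr_add (repr_shift n hcs) hct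

theorem stmt2 (a b : ℕ) (ha : 0 < a) (hb : 0 < b) :
    ell (a * b) ≤ 2 * ell a * ell b := by
  obtain ⟨t, ht, hrt⟩ := repr_mul (ell a) a (repr_ell a) (ell b) b (repr_ell b)
  exact le_trans (ell_le hrt) ht
end

section
/- For every positive integer a, l(3a) ≤ 2·l(a). -/
theorem stmt5 (a : ℕ) (ha : 0 < a) : ell (3 * a) ≤ 2 * ell a := by
  have hne : a ∈ {k | ∃ A n : Fin k → ℕ, (∀ i, A i = 1 ∨ A i = 3) ∧ a = ∑ i, A i * 2 ^ n i} := by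
    refine ⟨fun _ => 1, fun _ => 0, fun i => Or.inl rfl, ?_⟩
    simp
  have hmem : ell a ∈ {k | ∃ A n : Fin k → ℕ, (∀ i, A i = 1 ∨ A i = 3) ∧ a = ∑ i, A i * 2 ^ n i} :=
    Nat.sInf_mem ⟨a, hne⟩
  obtain ⟨B, M, hB, hsum⟩ := hmem
  have hmem3 : (ell a + ell a) ∈ {m | ∃ A n : Fin m → ℕ, (∀ i, A i = 1 ∨ A i = 3) ∧
      3 * a = ∑ i, A i * 2 ^ n i} := by
    refine ⟨fun _ => 1,
      Fin.addCases (fun i => M i + (if B i = 1 then 1 else 3)) M, fun i => Or.inl rfl, ?_⟩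
    conv_lhs => rw [hsum]
    rw [Finset.mul_sum, Fin.sum_univ_add]
    simp only [Fin.addCases_left, Fin.addCases_right, one_mul]
    rw [← Finset.sum_add_distrib]
    refine Finset.sum_congr rfl fun i _ => ?_
    rcases hB i with h | h <;> simp [h, pow_add] <;> ring
  calc ell (3 * a) ≤ ell a + ell a := Nat.sInf_le hmem3
    _ = 2 * ell a := (two_mul _).symm
end

section
/- For every positive integer k, (3/2)·k < 2^{o(k+1)}, i.e. 3·k < 2^{o(k+1)+1}. -/
lemma ell_le_s9 (g k : ℕ) (a n : Fin k → ℕ) (ha : ∀ i, a i = 1 ∨ a i = 3)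
    (hs : g = ∑ i, a i * 2 ^ n i) : ell g ≤ k :=
  Nat.sInf_le ⟨a, n, ha, hs⟩

lemma ell_self_mem (g : ℕ) :
    g ∈ {k | ∃ a n : Fin k → ℕ, (∀ i, a i = 1 ∨ a i = 3) ∧ g = ∑ i, a i * 2 ^ n i} :=
  ⟨fun _ => 1, fun _ => 0, fun _ => Or.inl rfl, by simp⟩

lemma ell_spec (g : ℕ) :
    ∃ a n : Fin (ell g) → ℕ, (∀ i, a i = 1 ∨ a i = 3) ∧ g = ∑ i, a i * 2 ^ n i :=
  Nat.sInf_mem ⟨g, ell_self_mem g⟩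

lemma ell_two_mul (g : ℕ) : ell (2 * g) ≤ ell g := by
  obtain ⟨a, n, ha, hs⟩ := ell_spec g
  refine ell_le_s9 _ _ a (fun i => n i + 1) ha ?_
  conv_lhs => rw [hs]
  rw [Finset.mul_sum]
  exact Finset.sum_congr rfl fun i _ => by ring

lemma ell_succ (g : ℕ) : ell (g + 1) ≤ ell g + 1 := by
  obtain ⟨a, n, ha, hs⟩ := ell_spec g
  refine ell_le_s9 _ _ (Fin.cons 1 a) (Fin.cons 0 n) ?_ ?_
  · intro i
    refine Fin.cases ?_ ?_ i
    · exact Or.inl rfl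
    · intro j; simpa using ha j
  · rw [Fin.sum_univ_succ]
    simp only [Fin.cons_succ, Fin.cons_zero]
    conv_lhs => rw [hs]
    omega

lemma ell_le_log : ∀ g, 0 < g → ell g ≤ Nat.log 2 g + 1 := by
  intro g
  induction g using Nat.strong_induction_on with
  | _ g ih =>
    intro hg
    rcases Nat.even_or_odd g with ⟨h, hh⟩ | ⟨h, hh⟩
    · have hg2 : g = 2 * h := by omega
      have hh0 : 0 < h := by omega
      subst hg2
      calc ell (2 * h) ≤ ell h := ell_two_mul h
        _ ≤ Nat.log 2 h + 1 := ih h (by omega) hh0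
        _ ≤ Nat.log 2 (2 * h) + 1 := by
            have := Nat.log_mono_right (b := 2) (by omega : h ≤ 2 * h)
            omega
    · subst hh
      rcases Nat.eq_zero_or_pos h with rfl | hh0
      · simpa using ell_le_s9 1 1 (fun _ => 1) (fun _ => 0) (fun _ => Or.inl rfl) (by simp)
      · have h1 : ell (2 * h + 1) ≤ ell (2 * h) + 1 := ell_succ (2 * h)
        have h2 : ell (2 * h) ≤ ell h := ell_two_mul h
        have h3 : ell h ≤ Nat.log 2 h + 1 := ih h (by omega) hh0
        have h4 : Nat.log 2 (h * 2) = Nat.log 2 h + 1 :=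
          Nat.log_mul_base (by norm_num) (by omega)
        have h5 : Nat.log 2 (h * 2) ≤ Nat.log 2 (2 * h + 1) :=
          Nat.log_mono_right (by omega)
        omega

lemma poly_bound : ∀ k, 6 ≤ k → 3 * k * (k + 1) < 2 ^ (k + 1) := by
  intro k hk
  induction k, hk using Nat.le_induction with
  | base => norm_num
  | succ k hk ih =>
    have : 2 ^ (k + 1 + 1) = 2 * 2 ^ (k + 1) := by ring
    nlinarith [ih]

theorem stmt9 (k : ℕ) (hk : 0 < k) : 3 * k < 2 ^ (obj (k + 1) + 1) := by
  rcases lt_or_ge k 6 with h6 | h6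
  · interval_cases k
    · have h := ell_le_s9 2 1 (fun _ => 1) (fun _ => 1) (fun _ => Or.inl rfl) (by simp)
      have : 1 ≤ obj 2 := by unfold obj; omega
      calc 3 * 1 < 2 ^ (1 + 1) := by norm_num
        _ ≤ 2 ^ (obj 2 + 1) := Nat.pow_le_pow_right (by norm_num) (by omega)
    · have h := ell_le_s9 3 1 (fun _ => 3) (fun _ => 0) (fun _ => Or.inr rfl) (by simp)
      have : 2 ≤ obj 3 := by unfold obj; omega
      calc 3 * 2 < 2 ^ (2 + 1) := by norm_num
        _ ≤ 2 ^ (obj 3 + 1) := Nat.pow_le_pow_right (by norm_num) (by omega)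
    · have h := ell_le_s9 4 1 (fun _ => 1) (fun _ => 2) (fun _ => Or.inl rfl) (by simp)
      have : 3 ≤ obj 4 := by unfold obj; omega
      calc 3 * 3 < 2 ^ (3 + 1) := by norm_num
        _ ≤ 2 ^ (obj 4 + 1) := Nat.pow_le_pow_right (by norm_num) (by omega)
    · have h := ell_le_s9 5 2 (fun _ => 1) (fun i => if i = 0 then 0 else 2)
        (fun _ => Or.inl rfl) (by simp [Fin.sum_univ_two])
      have : 3 ≤ obj 5 := by unfold obj; omega
      calc 3 * 4 < 2 ^ (3 + 1) := by norm_num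
        _ ≤ 2 ^ (obj 5 + 1) := Nat.pow_le_pow_right (by norm_num) (by omega)
    · have h := ell_le_s9 6 1 (fun _ => 3) (fun _ => 1) (fun _ => Or.inr rfl) (by simp)
      have : 5 ≤ obj 6 := by unfold obj; omega
      calc 3 * 5 < 2 ^ (5 + 1) := by norm_num
        _ ≤ 2 ^ (obj 6 + 1) := Nat.pow_le_pow_right (by norm_num) (by omega)
  · set L := Nat.log 2 (k + 1) with hL
    have hellb : ell (k + 1) ≤ L + 1 := ell_le_log (k + 1) (by omega)
    have hLk : L < k + 1 := Nat.log_lt_self 2 (by omega)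
    have hobj : k - L ≤ obj (k + 1) := by unfold obj; omega
    have hpow : 2 ^ L ≤ k + 1 := Nat.pow_log_le_self 2 (by omega)
    have hkey : 3 * k < 2 ^ (k + 1 - L) := by
      have hp : 3 * k * 2 ^ L < 2 ^ (k + 1 - L) * 2 ^ L := by
        rw [← pow_add]
        have : k + 1 - L + L = k + 1 := by omega
        rw [this]
        calc 3 * k * 2 ^ L ≤ 3 * k * (k + 1) := by
              exact Nat.mul_le_mul_left _ hpow
          _ < 2 ^ (k + 1) := poly_bound k h6
      exact Nat.lt_of_mul_lt_mul_right hp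
    calc 3 * k < 2 ^ (k + 1 - L) := hkey
      _ ≤ 2 ^ (obj (k + 1) + 1) := Nat.pow_le_pow_right (by norm_num) (by omega)
end

section
/- For every integer k ≥ 4, 3k < 2^{o(2k−2)}. -/
lemma ell_two_mul_le (m : ℕ) : ell (2 * m) ≤ m := by
  apply Nat.sInf_le
  refine ⟨fun _ => 1, fun _ => 1, fun i => Or.inl rfl, ?_⟩
  simp [Finset.sum_const, Finset.card_univ, Nat.mul_comm]

lemma ell_six_le : ell 6 ≤ 1 := by
  apply Nat.sInf_le
  refine ⟨fun _ => 3, fun _ => 1, fun i => Or.inr rfl, ?_⟩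
  simp

lemma three_lt (k : ℕ) (hk : 5 ≤ k) : 3 * k < 2 ^ (k - 1) := by
  induction k with
  | zero => omega
  | succ n ih =>
    rcases Nat.lt_or_ge n 5 with h | h
    · interval_cases n <;> first | omega | norm_num
    · have h1 := ih (by omega)
      have h2 : (2:ℕ) ^ (n - 1) ≥ 3 := by
        calc (2:ℕ)^(n-1) ≥ 2^2 := Nat.pow_le_pow_right (by norm_num) (by omega)
        _ ≥ 3 := by norm_num
      have : n + 1 - 1 = (n - 1) + 1 := by omega
      rw [this, pow_succ]
      omega

theorem stmt12 (k : ℕ) (hk : 4 ≤ k) : 3 * k < 2 ^ obj (2 * k - 2) := by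
  rcases Nat.lt_or_ge k 5 with h | h
  · have hk4 : k = 4 := by omega
    subst hk4
    have h6 : (2 * 4 - 2 : ℕ) = 6 := by norm_num
    have := ell_six_le
    have hobj : 5 ≤ obj (2 * 4 - 2) := by
      unfold obj; rw [h6]; omega
    calc (3 * 4 : ℕ) < 2 ^ 5 := by norm_num
    _ ≤ 2 ^ obj (2 * 4 - 2) := Nat.pow_le_pow_right (by norm_num) hobj
  · have hm : 2 * k - 2 = 2 * (k - 1) := by omega
    have hle : ell (2 * k - 2) ≤ k - 1 := by rw [hm]; exact ell_two_mul_le (k - 1)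
    have hobj : k - 1 ≤ obj (2 * k - 2) := by unfold obj; omega
    calc 3 * k < 2 ^ (k - 1) := three_lt k h
    _ ≤ 2 ^ obj (2 * k - 2) := Nat.pow_le_pow_right (by norm_num) hobj
end

section
/- For every positive integer k, o(⌈k/2⌉ + 1) − ⌊k/6⌋ ≥ o(⌈k/8⌉ + 1). -/
/-!
Grouping the binary digits of `g` in pairs, each base-4 digit `d` of `g` at position `i`
contributes one term `2 ^ (2 i)`, `2 ^ (2 i + 1)` or `3 · 2 ^ (2 i)` (none if `d = 0`), so
`l(g) ≤ log₄ g + 1 ≤ g / 4 + 1`. With `l ≥ 1` on positive integers this reduces the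
inequality to linear arithmetic in `k`.
-/

lemma ell_le_of_sum {g k : ℕ} (a n : Fin k → ℕ) (ha : ∀ i, a i = 1 ∨ a i = 3)
    (hg : g = ∑ i, a i * 2 ^ n i) : ell g ≤ k :=
  Nat.sInf_le ⟨a, n, ha, hg⟩

lemma ell_pos {g : ℕ} (hg : g ≠ 0) : 0 < ell g := by
  refine Nat.pos_of_ne_zero fun h => hg ?_
  obtain ⟨a, n, -, hsum⟩ := ell_spec g
  have : IsEmpty (Fin (ell g)) := by rw [h]; infer_instance
  rw [hsum, Finset.sum_of_isEmpty]

lemma ell_single {a : ℕ} (ha : a = 1 ∨ a = 3) (n : ℕ) : ell (a * 2 ^ n) ≤ 1 :=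
  ell_le_of_sum (fun _ => a) (fun _ => n) (fun _ => ha) (by simp)

lemma ell_le_one_of_lt_four {r : ℕ} (hr : r < 4) : ell r ≤ 1 := by
  interval_cases r
  · exact ell_le_of_sum (k := 0) ![] ![] nofun (by simp) |>.trans zero_le_one
  · exact ell_single (Or.inl rfl) 0
  · exact ell_single (Or.inl rfl) 1
  · exact ell_single (Or.inr rfl) 0

lemma ell_add_le (g h : ℕ) : ell (g + h) ≤ ell g + ell h := by
  obtain ⟨a, n, ha, hg⟩ := ell_spec g
  obtain ⟨b, m, hb, hh⟩ := ell_spec h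
  refine ell_le_of_sum (Fin.append a b) (Fin.append n m)
    (Fin.addCases (by simpa using ha) (by simpa using hb)) ?_
  simp only [Fin.sum_univ_add, Fin.append_left, Fin.append_right]
  omega

lemma ell_two_pow_mul_le (j g : ℕ) : ell (2 ^ j * g) ≤ ell g := by
  obtain ⟨a, n, ha, hg⟩ := ell_spec g
  refine ell_le_of_sum a (fun i => n i + j) ha ?_
  have : ∑ i, a i * 2 ^ (n i + j) = 2 ^ j * ∑ i, a i * 2 ^ n i := by
    rw [Finset.mul_sum]
    exact Finset.sum_congr rfl fun i _ => by ring
  rw [this, ← hg]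

lemma ell_le_log_four_add_one (g : ℕ) : ell g ≤ Nat.log 4 g + 1 := by
  induction g using Nat.strong_induction_on with
  | _ g ih =>
    rcases lt_or_ge g 4 with hg | hg
    · exact (ell_le_one_of_lt_four hg).trans (Nat.le_add_left _ _)
    have hlog : Nat.log 4 (g / 4) + 1 = Nat.log 4 g := by
      rw [Nat.log_div_base]
      exact Nat.sub_add_cancel (Nat.log_pos (by norm_num) hg)
    calc ell g = ell (g % 4 + 2 ^ 2 * (g / 4)) := by congr 1; omega
      _ ≤ ell (g % 4) + ell (g / 4) :=
          (ell_add_le _ _).trans (Nat.add_le_add_left (ell_two_pow_mul_le _ _) _)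
      _ ≤ 1 + (Nat.log 4 (g / 4) + 1) :=
          Nat.add_le_add (ell_le_one_of_lt_four (Nat.mod_lt _ (by norm_num)))
            (ih _ (Nat.div_lt_self (by omega) (by norm_num)))
      _ = Nat.log 4 g + 1 := by omega

lemma Nat.log_le_div_self (b n : ℕ) : Nat.log b n ≤ n / b := by
  rcases le_or_gt b 1 with hb | hb
  · simp [Nat.log_of_left_le_one hb]
  rcases Nat.eq_zero_or_pos n with rfl | hn
  · simp
  refine Nat.lt_succ_iff.mp (Nat.log_lt_of_lt_pow hn.ne' ?_)
  calc n < b * (n / b + 1) := Nat.lt_mul_div_succ n (by omega)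
    _ ≤ b * b ^ (n / b) := Nat.mul_le_mul_left b (Nat.lt_pow_self hb)
    _ = b ^ (n / b + 1) := (pow_succ' ..).symm

theorem stmt16_general (k : ℕ) :
    obj ((k + 1) / 2 + 1) ≥ obj ((k + 7) / 8 + 1) + k / 6 := by
  have hm := (ell_le_log_four_add_one ((k + 1) / 2 + 1)).trans
    (Nat.add_le_add_right (Nat.log_le_div_self 4 _) 1)
  have hn := ell_pos (g := (k + 7) / 8 + 1) (Nat.succ_ne_zero _)
  unfold obj
  omega

theorem stmt16 (k : ℕ) (hk : 0 < k) :
    obj ((k + 1) / 2 + 1) ≥ obj ((k + 7) / 8 + 1) + k / 6 :=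
  stmt16_general k
end

section
/- For a positive integer a, one has l(a) = 2 and l(3a) = 4 if and only if a = 3·(2^m + 2^p) for some nonnegative integers m, p with |m − p| ≥ 5. -/
namespace Stmt19Aux

def R1 (g : ℕ) : Prop := ∃ x i : ℕ, (x = 1 ∨ x = 3) ∧ g = x * 2 ^ i
def R2 (g : ℕ) : Prop :=
  ∃ x y i j : ℕ, (x = 1 ∨ x = 3) ∧ (y = 1 ∨ y = 3) ∧ g = x * 2 ^ i + y * 2 ^ j
def R3 (g : ℕ) : Prop :=
  ∃ x y z i j k : ℕ, (x = 1 ∨ x = 3) ∧ (y = 1 ∨ y = 3) ∧ (z = 1 ∨ z = 3) ∧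
    g = x * 2 ^ i + y * 2 ^ j + z * 2 ^ k

lemma odd_part_eq : ∀ i s x M : ℕ, x % 2 = 1 → M % 2 = 1 → x * 2 ^ i = M * 2 ^ s → x = M := by
  intro i
  induction i with
  | zero =>
    intro s x M hx hM h
    cases s with
    | zero => simpa using h
    | succ s =>
      exfalso
      have h2 : x = 2 * (M * 2 ^ s) := by
        have hx2 : x = M * 2 ^ (s + 1) := by simpa using h
        rw [hx2]; ring
      generalize M * 2 ^ s = A at h2
      omega
  | succ i ih =>
    intro s x M hx hM h
    cases s with
    | zero =>
      exfalso
      have h2 : M = 2 * (x * 2 ^ i) := by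
        have hx2 : M = x * 2 ^ (i + 1) := by simpa using h.symm
        rw [hx2]; ring
      generalize x * 2 ^ i = A at h2
      omega
    | succ s =>
      apply ih s x M hx hM
      have h2 : x * 2 ^ i * 2 = M * 2 ^ s * 2 := by
        rw [mul_assoc, mul_assoc, ← pow_succ, ← pow_succ]
        exact h
      exact Nat.eq_of_mul_eq_mul_right (by norm_num) h2

lemma smallR1 {g : ℕ} (h1 : 1 ≤ g) (h3 : g ≤ 3) : R1 g := by
  interval_cases g
  · exact ⟨1, 0, Or.inl rfl, by norm_num⟩
  · exact ⟨1, 1, Or.inl rfl, by norm_num⟩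
  · exact ⟨3, 0, Or.inr rfl, by norm_num⟩

lemma pair {y z : ℕ} (hy : y = 1 ∨ y = 3) (hz : z = 1 ∨ z = 3) :
    ∃ c e : ℕ, (c = 1 ∨ c = 3) ∧ y + z = 2 * (c * 2 ^ e) := by
  rcases hy with rfl | rfl <;> rcases hz with rfl | rfl
  · exact ⟨1, 0, Or.inl rfl, by norm_num⟩
  · exact ⟨1, 1, Or.inl rfl, by norm_num⟩
  · exact ⟨1, 1, Or.inl rfl, by norm_num⟩
  · exact ⟨3, 0, Or.inr rfl, by norm_num⟩

lemma half1 {g : ℕ} (h : R1 (2 * g)) : R1 g := by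
  obtain ⟨x, i, hx, he⟩ := h
  cases i with
  | zero =>
    exfalso
    simp at he
    rcases hx with rfl | rfl <;> omega
  | succ i =>
    refine ⟨x, i, hx, ?_⟩
    have h2 : 2 * g = 2 * (x * 2 ^ i) := by rw [he]; ring
    exact Nat.eq_of_mul_eq_mul_left (by norm_num) h2

lemma half2 {g : ℕ} (h : R2 (2 * g)) : R1 g ∨ R2 g := by
  obtain ⟨x, y, i, j, hx, hy, he⟩ := h
  cases i with
  | zero =>
    cases j with
    | zero =>
      left
      have he' : 2 * g = x + y := by simpa using he
      rcases hx with rfl | rfl <;> rcases hy with rfl | rfl <;>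
        exact smallR1 (by omega) (by omega)
    | succ j =>
      exfalso
      have h2 : 2 * g = x + 2 * (y * 2 ^ j) := by rw [he]; ring
      generalize y * 2 ^ j = A at h2
      rcases hx with rfl | rfl <;> omega
  | succ i =>
    cases j with
    | zero =>
      exfalso
      have h2 : 2 * g = y + 2 * (x * 2 ^ i) := by rw [he]; ring
      generalize x * 2 ^ i = A at h2
      rcases hy with rfl | rfl <;> omega
    | succ j =>
      right
      refine ⟨x, y, i, j, hx, hy, ?_⟩
      have h2 : 2 * g = 2 * (x * 2 ^ i + y * 2 ^ j) := by rw [he]; ring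
      exact Nat.eq_of_mul_eq_mul_left (by norm_num) h2

lemma half3 {g : ℕ} (h : R3 (2 * g)) : R1 g ∨ R2 g ∨ R3 g := by
  obtain ⟨x, y, z, i, j, k, hx, hy, hz, he⟩ := h
  cases i with
  | zero =>
    cases j with
    | zero =>
      cases k with
      | zero =>
        exfalso
        have he' : 2 * g = x + y + z := by simpa using he
        rcases hx with rfl | rfl <;> rcases hy with rfl | rfl <;>
          rcases hz with rfl | rfl <;> omega
      | succ k =>
        right; left
        obtain ⟨c, e, hc, hce⟩ := pair hx hy
        refine ⟨c, z, e, k, hc, hz, ?_⟩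
        have h2 : 2 * g = 2 * (c * 2 ^ e + z * 2 ^ k) := by
          rw [he, mul_add, ← hce]; ring
        exact Nat.eq_of_mul_eq_mul_left (by norm_num) h2
    | succ j =>
      cases k with
      | zero =>
        right; left
        obtain ⟨c, e, hc, hce⟩ := pair hx hz
        refine ⟨c, y, e, j, hc, hy, ?_⟩
        have h2 : 2 * g = 2 * (c * 2 ^ e + y * 2 ^ j) := by
          rw [he, mul_add, ← hce]; ring
        exact Nat.eq_of_mul_eq_mul_left (by norm_num) h2
      | succ k =>
        exfalso
        have h2 : 2 * g = x + 2 * (y * 2 ^ j + z * 2 ^ k) := by rw [he]; ring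
        generalize y * 2 ^ j + z * 2 ^ k = A at h2
        rcases hx with rfl | rfl <;> omega
  | succ i =>
    cases j with
    | zero =>
      cases k with
      | zero =>
        right; left
        obtain ⟨c, e, hc, hce⟩ := pair hy hz
        refine ⟨x, c, i, e, hx, hc, ?_⟩
        have h2 : 2 * g = 2 * (x * 2 ^ i + c * 2 ^ e) := by
          rw [he, mul_add, ← hce]; ring
        exact Nat.eq_of_mul_eq_mul_left (by norm_num) h2
      | succ k =>
        exfalso
        have h2 : 2 * g = y + 2 * (x * 2 ^ i + z * 2 ^ k) := by rw [he]; ring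
        generalize x * 2 ^ i + z * 2 ^ k = A at h2
        rcases hy with rfl | rfl <;> omega
    | succ j =>
      cases k with
      | zero =>
        exfalso
        have h2 : 2 * g = z + 2 * (x * 2 ^ i + y * 2 ^ j) := by rw [he]; ring
        generalize x * 2 ^ i + y * 2 ^ j = A at h2
        rcases hz with rfl | rfl <;> omega
      | succ k =>
        right; right
        refine ⟨x, y, z, i, j, k, hx, hy, hz, ?_⟩
        have h2 : 2 * g = 2 * (x * 2 ^ i + y * 2 ^ j + z * 2 ^ k) := by rw [he]; ring
        exact Nat.eq_of_mul_eq_mul_left (by norm_num) h2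

lemma E2 : ∀ s M : ℕ, M % 2 = 1 → R2 (M * 2 ^ s) →
    M = 1 ∨ M = 3 ∨ ∃ x y e : ℕ, (x = 1 ∨ x = 3) ∧ (y = 1 ∨ y = 3) ∧ M = x + y * 2 ^ e := by
  intro s
  induction s with
  | zero =>
    intro M hM h
    obtain ⟨x, y, i, j, hx, hy, he⟩ := h
    have he' : M = x * 2 ^ i + y * 2 ^ j := by simpa using he
    cases i with
    | zero =>
      right; right
      exact ⟨x, y, j, hx, hy, by simpa using he'⟩
    | succ i =>
      cases j with
      | zero =>
        right; right
        refine ⟨y, x, i + 1, hy, hx, ?_⟩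
        rw [he']; ring
      | succ j =>
        exfalso
        have h2 : M = 2 * (x * 2 ^ i + y * 2 ^ j) := by rw [he']; ring
        generalize x * 2 ^ i + y * 2 ^ j = A at h2
        omega
  | succ s ih =>
    intro M hM h
    obtain ⟨x, y, i, j, hx, hy, he⟩ := h
    cases i with
    | zero =>
      cases j with
      | zero =>
        have he' : M * 2 ^ (s + 1) = x + y := by simpa using he
        rcases hx with rfl | rfl <;> rcases hy with rfl | rfl
        · left; exact odd_part_eq (s+1) 1 M 1 hM (by norm_num) (by rw [he']; norm_num)
        · left; exact odd_part_eq (s+1) 2 M 1 hM (by norm_num) (by rw [he']; norm_num)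
        · left; exact odd_part_eq (s+1) 2 M 1 hM (by norm_num) (by rw [he']; norm_num)
        · right; left; exact odd_part_eq (s+1) 1 M 3 hM (by norm_num) (by rw [he']; norm_num)
      | succ j =>
        exfalso
        have h2 : 2 * (M * 2 ^ s) = x + 2 * (y * 2 ^ j) := by
          calc 2 * (M * 2 ^ s) = M * 2 ^ (s + 1) := by ring
          _ = x * 2 ^ 0 + y * 2 ^ (j + 1) := he
          _ = x + 2 * (y * 2 ^ j) := by ring
        generalize M * 2 ^ s = A at h2
        generalize y * 2 ^ j = B at h2
        rcases hx with rfl | rfl <;> omega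
    | succ i =>
      cases j with
      | zero =>
        exfalso
        have h2 : 2 * (M * 2 ^ s) = y + 2 * (x * 2 ^ i) := by
          calc 2 * (M * 2 ^ s) = M * 2 ^ (s + 1) := by ring
          _ = x * 2 ^ (i + 1) + y * 2 ^ 0 := he
          _ = y + 2 * (x * 2 ^ i) := by ring
        generalize M * 2 ^ s = A at h2
        generalize x * 2 ^ i = B at h2
        rcases hy with rfl | rfl <;> omega
      | succ j =>
        apply ih M hM
        have h2 : 2 * (M * 2 ^ s) = 2 * (x * 2 ^ i + y * 2 ^ j) := by
          calc 2 * (M * 2 ^ s) = M * 2 ^ (s + 1) := by ring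
          _ = x * 2 ^ (i + 1) + y * 2 ^ (j + 1) := he
          _ = 2 * (x * 2 ^ i + y * 2 ^ j) := by ring
        exact ⟨x, y, i, j, hx, hy, Nat.eq_of_mul_eq_mul_left (by norm_num) h2⟩

lemma offsets {M : ℕ} (hM : M % 2 = 1) (h1 : M ≠ 1) (h3 : M ≠ 3)
    (g1 : ∀ y e : ℕ, (y = 1 ∨ y = 3) → y * 2 ^ e ≠ M - 1)
    (g3 : ∀ y e : ℕ, (y = 1 ∨ y = 3) → y * 2 ^ e ≠ M - 3) (s : ℕ) :
    ¬ R2 (M * 2 ^ s) := by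
  intro h
  rcases E2 s M hM h with rfl | rfl | ⟨x, y, e, hx, hy, hMe⟩
  · exact h1 rfl
  · exact h3 rfl
  · rcases hx with rfl | rfl
    · apply g1 y e hy
      generalize y * 2 ^ e = C at hMe ⊢
      omega
    · apply g3 y e hy
      generalize y * 2 ^ e = C at hMe ⊢
      omega

lemma no_odd' (B s1 s2 : ℕ) (hB : 1 ≤ B)
    (e1 : 36 * B = 9 * 2 ^ s1) (e2 : 144 * B = 9 * 2 ^ s2) :
    ¬ (R1 (288 * B + 9) ∨ R2 (288 * B + 9) ∨ R3 (288 * B + 9)) := by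
  have hM1 : ∀ s, ¬ R2 ((36 * B + 1) * 2 ^ s) := by
    refine offsets (by omega) (by omega) (by omega) ?_ ?_
    · intro y e hy heq
      have h9 : y * 2 ^ e = 9 * 2 ^ s1 := by
        rw [← e1]; generalize y * 2 ^ e = C at heq ⊢; omega
      have := odd_part_eq e s1 y 9 (by rcases hy with rfl | rfl <;> norm_num) (by norm_num) h9
      omega
    · intro y e hy heq
      have h9 : y * 2 ^ e = (18 * B - 1) * 2 ^ 1 := by
        rw [pow_one]; generalize y * 2 ^ e = C at heq ⊢; omega
      have := odd_part_eq e 1 y (18 * B - 1)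
        (by rcases hy with rfl | rfl <;> norm_num) (by omega) h9
      omega
  have hM2 : ∀ s, ¬ R2 ((144 * B + 3) * 2 ^ s) := by
    refine offsets (by omega) (by omega) (by omega) ?_ ?_
    · intro y e hy heq
      have h9 : y * 2 ^ e = (72 * B + 1) * 2 ^ 1 := by
        rw [pow_one]; generalize y * 2 ^ e = C at heq ⊢; omega
      have := odd_part_eq e 1 y (72 * B + 1)
        (by rcases hy with rfl | rfl <;> norm_num) (by omega) h9
      omega
    · intro y e hy heq
      have h9 : y * 2 ^ e = 9 * 2 ^ s2 := by
        rw [← e2]; generalize y * 2 ^ e = C at heq ⊢; omega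
      have := odd_part_eq e s2 y 9 (by rcases hy with rfl | rfl <;> norm_num) (by norm_num) h9
      omega
  have hR2N : ∀ s, ¬ R2 ((288 * B + 9) * 2 ^ s) := by
    refine offsets (by omega) (by omega) (by omega) ?_ ?_
    · intro y e hy heq
      have h9 : y * 2 ^ e = (36 * B + 1) * 2 ^ 3 := by
        have hv : (36 * B + 1) * 2 ^ 3 = 288 * B + 8 := by ring
        rw [hv]; generalize y * 2 ^ e = C at heq ⊢; omega
      have := odd_part_eq e 3 y (36 * B + 1)
        (by rcases hy with rfl | rfl <;> norm_num) (by omega) h9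
      omega
    · intro y e hy heq
      have h9 : y * 2 ^ e = (144 * B + 3) * 2 ^ 1 := by
        rw [pow_one]; generalize y * 2 ^ e = C at heq ⊢; omega
      have := odd_part_eq e 1 y (144 * B + 3)
        (by rcases hy with rfl | rfl <;> norm_num) (by omega) h9
      omega
  rintro (h | h | h)
  · obtain ⟨x, i, hx, he⟩ := h
    have hxe : x = 288 * B + 9 :=
      odd_part_eq i 0 x (288 * B + 9) (by rcases hx with rfl | rfl <;> norm_num) (by omega)
        (by rw [pow_zero, mul_one]; exact he.symm)
    omega
  · have := hR2N 0
    rw [pow_zero, mul_one] at this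
    exact this h
  · obtain ⟨x, y, z, i, j, k, hx, hy, hz, he⟩ := h
    cases i with
    | zero =>
      cases j with
      | zero =>
        cases k with
        | zero =>
          have he' : 288 * B + 9 = x + y + z := by simpa using he
          rcases hx with rfl | rfl <;> rcases hy with rfl | rfl <;>
            rcases hz with rfl | rfl <;> omega
        | succ k =>
          have h2 : 288 * B + 9 = x + y + 2 * (z * 2 ^ k) := by rw [he]; ring
          generalize z * 2 ^ k = C at h2
          rcases hx with rfl | rfl <;> rcases hy with rfl | rfl <;> omega
      | succ j =>
        cases k with
        | zero =>
          have h2 : 288 * B + 9 = x + z + 2 * (y * 2 ^ j) := by rw [he]; ring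
          generalize y * 2 ^ j = C at h2
          rcases hx with rfl | rfl <;> rcases hz with rfl | rfl <;> omega
        | succ k =>
          have h2 : 288 * B + 9 = x + 2 * (y * 2 ^ j + z * 2 ^ k) := by rw [he]; ring
          rcases hx with rfl | rfl
          · apply hM1 2
            refine ⟨y, z, j, k, hy, hz, ?_⟩
            have hv : (36 * B + 1) * 2 ^ 2 = 144 * B + 4 := by ring
            rw [hv]
            generalize y * 2 ^ j = C at h2 ⊢
            generalize z * 2 ^ k = D at h2 ⊢
            omega
          · apply hM2 0
            refine ⟨y, z, j, k, hy, hz, ?_⟩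
            have hv : (144 * B + 3) * 2 ^ 0 = 144 * B + 3 := by ring
            rw [hv]
            generalize y * 2 ^ j = C at h2 ⊢
            generalize z * 2 ^ k = D at h2 ⊢
            omega
    | succ i =>
      cases j with
      | zero =>
        cases k with
        | zero =>
          have h2 : 288 * B + 9 = y + z + 2 * (x * 2 ^ i) := by rw [he]; ring
          generalize x * 2 ^ i = C at h2
          rcases hy with rfl | rfl <;> rcases hz with rfl | rfl <;> omega
        | succ k =>
          have h2 : 288 * B + 9 = y + 2 * (x * 2 ^ i + z * 2 ^ k) := by rw [he]; ring
          rcases hy with rfl | rfl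
          · apply hM1 2
            refine ⟨x, z, i, k, hx, hz, ?_⟩
            have hv : (36 * B + 1) * 2 ^ 2 = 144 * B + 4 := by ring
            rw [hv]
            generalize x * 2 ^ i = C at h2 ⊢
            generalize z * 2 ^ k = D at h2 ⊢
            omega
          · apply hM2 0
            refine ⟨x, z, i, k, hx, hz, ?_⟩
            have hv : (144 * B + 3) * 2 ^ 0 = 144 * B + 3 := by ring
            rw [hv]
            generalize x * 2 ^ i = C at h2 ⊢
            generalize z * 2 ^ k = D at h2 ⊢
            omega
      | succ j =>
        cases k with
        | zero =>
          have h2 : 288 * B + 9 = z + 2 * (x * 2 ^ i + y * 2 ^ j) := by rw [he]; ring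
          rcases hz with rfl | rfl
          · apply hM1 2
            refine ⟨x, y, i, j, hx, hy, ?_⟩
            have hv : (36 * B + 1) * 2 ^ 2 = 144 * B + 4 := by ring
            rw [hv]
            generalize x * 2 ^ i = C at h2 ⊢
            generalize y * 2 ^ j = D at h2 ⊢
            omega
          · apply hM2 0
            refine ⟨x, y, i, j, hx, hy, ?_⟩
            have hv : (144 * B + 3) * 2 ^ 0 = 144 * B + 3 := by ring
            rw [hv]
            generalize x * 2 ^ i = C at h2 ⊢
            generalize y * 2 ^ j = D at h2 ⊢
            omega
        | succ k =>
          have h2 : 288 * B + 9 = 2 * (x * 2 ^ i + y * 2 ^ j + z * 2 ^ k) := by rw [he]; ring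
          generalize x * 2 ^ i + y * 2 ^ j + z * 2 ^ k = C at h2
          omega

lemma no_rep (d : ℕ) (hd : 5 ≤ d) (p : ℕ) :
    ¬ (R1 ((9 * 2 ^ d + 9) * 2 ^ p) ∨ R2 ((9 * 2 ^ d + 9) * 2 ^ p) ∨
       R3 ((9 * 2 ^ d + 9) * 2 ^ p)) := by
  induction p with
  | zero =>
    obtain ⟨d', rfl⟩ : ∃ d', d = d' + 5 := ⟨d - 5, by omega⟩
    have hB : 1 ≤ 2 ^ d' := Nat.one_le_two_pow
    have hN : (9 * 2 ^ (d' + 5) + 9) * 2 ^ 0 = 288 * 2 ^ d' + 9 := by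
      rw [pow_add]; ring
    rw [hN]
    exact no_odd' (2 ^ d') (d' + 2) (d' + 4) hB (by rw [pow_add]; ring) (by rw [pow_add]; ring)
  | succ p ih =>
    have h2 : (9 * 2 ^ d + 9) * 2 ^ (p + 1) = 2 * ((9 * 2 ^ d + 9) * 2 ^ p) := by ring
    rw [h2]
    rintro (h | h | h)
    · exact ih (Or.inl (half1 h))
    · rcases half2 h with h' | h'
      · exact ih (Or.inl h')
      · exact ih (Or.inr (Or.inl h'))
    · rcases half3 h with h' | h' | h'
      · exact ih (Or.inl h')
      · exact ih (Or.inr (Or.inl h'))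
      · exact ih (Or.inr (Or.inr h'))

lemma ell_le {g k : ℕ} (a n : Fin k → ℕ) (ha : ∀ i, a i = 1 ∨ a i = 3)
    (he : g = ∑ i, a i * 2 ^ n i) : ell g ≤ k :=
  Nat.sInf_le ⟨a, n, ha, he⟩

lemma ell_eq {g v : ℕ}
    (hmem : ∃ a n : Fin v → ℕ, (∀ i, a i = 1 ∨ a i = 3) ∧ g = ∑ i, a i * 2 ^ n i)
    (hlb : ∀ k : ℕ, (∃ a n : Fin k → ℕ, (∀ i, a i = 1 ∨ a i = 3) ∧
      g = ∑ i, a i * 2 ^ n i) → v ≤ k) :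
    ell g = v := by
  have hne : {k | ∃ a n : Fin k → ℕ, (∀ i, a i = 1 ∨ a i = 3) ∧
      g = ∑ i, a i * 2 ^ n i}.Nonempty := ⟨v, hmem⟩
  have hm := Nat.sInf_mem hne
  exact le_antisymm (Nat.sInf_le hmem) (hlb _ hm)

lemma small_d (q dd : ℕ) (hdd : dd ≤ 4) (g : ℕ) (hg : g = (9 * 2 ^ dd + 9) * 2 ^ q) :
    ell g ≤ 3 := by
  subst hg
  interval_cases dd
  · refine le_trans (ell_le ![1, 1] ![q + 4, q + 1] (by intro i; fin_cases i <;> norm_num) ?_)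
      (by norm_num)
    simp [Fin.sum_univ_two, pow_add]; ring
  · refine le_trans (ell_le ![3, 3] ![q + 3, q] (by intro i; fin_cases i <;> norm_num) ?_)
      (by norm_num)
    simp [Fin.sum_univ_two, pow_add]; ring
  · refine ell_le ![1, 3, 1] ![q + 5, q + 2, q] (by intro i; fin_cases i <;> norm_num) ?_
    simp [Fin.sum_univ_three, pow_add]; ring
  · refine ell_le ![1, 1, 1] ![q + 6, q + 4, q] (by intro i; fin_cases i <;> norm_num) ?_
    simp [Fin.sum_univ_three, pow_add]; ring
  · refine ell_le ![1, 3, 1] ![q + 7, q + 3, q] (by intro i; fin_cases i <;> norm_num) ?_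
    simp [Fin.sum_univ_three, pow_add]; ring

lemma core (p d : ℕ) (hd : 5 ≤ d) :
    ell (3 * (2 ^ (p + d) + 2 ^ p)) = 2 ∧ ell (3 * (3 * (2 ^ (p + d) + 2 ^ p))) = 4 := by
  have hB : 1 ≤ 2 ^ p := Nat.one_le_two_pow
  have hD : 32 ≤ 2 ^ d := by
    calc (32 : ℕ) = 2 ^ 5 := by norm_num
    _ ≤ 2 ^ d := Nat.pow_le_pow_right (by norm_num) hd
  constructor
  · apply ell_eq
    · refine ⟨![3, 3], ![p + d, p], by intro i; fin_cases i <;> norm_num, ?_⟩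
      simp [Fin.sum_univ_two]; ring
    · intro k hk
      by_contra hlt
      push_neg at hlt
      interval_cases k
      · obtain ⟨A, n, hA, he⟩ := hk
        rw [show (∑ i : Fin 0, A i * 2 ^ n i) = 0 from by simp] at he
        have h1 : 1 ≤ 2 ^ (p + d) := Nat.one_le_two_pow
        generalize 2 ^ (p + d) = X at he h1
        generalize 2 ^ p = Y at he
        omega
      · obtain ⟨A, n, hA, he⟩ := hk
        rw [Fin.sum_univ_one] at he
        have heq : A 0 * 2 ^ n 0 = (3 * 2 ^ d + 3) * 2 ^ p := by
          rw [← he, pow_add]; ring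
        have hodd : (3 * 2 ^ d + 3) % 2 = 1 := by
          obtain ⟨d', rfl⟩ : ∃ d', d = d' + 1 := ⟨d - 1, by omega⟩
          have h2 : (2 : ℕ) ^ (d' + 1) = 2 * 2 ^ d' := by rw [pow_succ]; ring
          rw [h2]; generalize (2 : ℕ) ^ d' = C; omega
        have hA0 := odd_part_eq (n 0) p (A 0) (3 * 2 ^ d + 3)
          (by rcases hA 0 with h | h <;> omega) hodd heq
        have hbig : 99 ≤ A 0 := by rw [hA0]; linarith
        rcases hA 0 with h | h <;> omega
  · apply ell_eq
    · refine ⟨![1, 1, 1, 1], ![p + d + 3, p + d, p + 3, p],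
        by intro i; fin_cases i <;> norm_num, ?_⟩
      simp [Fin.sum_univ_four, pow_add]; ring
    · intro k hk
      by_contra hlt
      push_neg at hlt
      have h3a : 3 * (3 * (2 ^ (p + d) + 2 ^ p)) = (9 * 2 ^ d + 9) * 2 ^ p := by
        rw [pow_add]; ring
      interval_cases k
      · obtain ⟨A, n, hA, he⟩ := hk
        rw [show (∑ i : Fin 0, A i * 2 ^ n i) = 0 from by simp] at he
        have h1 : 1 ≤ 2 ^ (p + d) := Nat.one_le_two_pow
        generalize 2 ^ (p + d) = X at he h1
        generalize 2 ^ p = Y at he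
        omega
      · obtain ⟨A, n, hA, he⟩ := hk
        rw [Fin.sum_univ_one] at he
        exact no_rep d hd p (Or.inl ⟨A 0, n 0, hA 0, by rw [← h3a]; exact he⟩)
      · obtain ⟨A, n, hA, he⟩ := hk
        rw [Fin.sum_univ_two] at he
        exact no_rep d hd p
          (Or.inr (Or.inl ⟨A 0, A 1, n 0, n 1, hA 0, hA 1, by rw [← h3a]; exact he⟩))
      · obtain ⟨A, n, hA, he⟩ := hk
        rw [Fin.sum_univ_three] at he
        exact no_rep d hd p (Or.inr (Or.inr
          ⟨A 0, A 1, A 2, n 0, n 1, n 2, hA 0, hA 1, hA 2, by rw [← h3a]; exact he⟩))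

end Stmt19Aux

open Stmt19Aux

theorem stmt19 (a : ℕ) (ha : 0 < a) :
    (ell a = 2 ∧ ell (3 * a) = 4) ↔
      ∃ m p : ℕ, a = 3 * (2 ^ m + 2 ^ p) ∧ 5 ≤ |(m : ℤ) - p| := by
  constructor
  · rintro ⟨h2, h4⟩
    have hne : {k | ∃ A n : Fin k → ℕ, (∀ i, A i = 1 ∨ A i = 3) ∧
        a = ∑ i, A i * 2 ^ n i}.Nonempty := by
      by_contra hcon
      rw [Set.not_nonempty_iff_eq_empty] at hcon
      have h2' : sInf {k | ∃ A n : Fin k → ℕ, (∀ i, A i = 1 ∨ A i = 3) ∧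
          a = ∑ i, A i * 2 ^ n i} = 2 := h2
      rw [hcon, Nat.sInf_empty] at h2'
      omega
    have hmem : 2 ∈ {k | ∃ A n : Fin k → ℕ, (∀ i, A i = 1 ∨ A i = 3) ∧
        a = ∑ i, A i * 2 ^ n i} := by
      have hm := Nat.sInf_mem hne
      have h2' : sInf {k | ∃ A n : Fin k → ℕ, (∀ i, A i = 1 ∨ A i = 3) ∧
          a = ∑ i, A i * 2 ^ n i} = 2 := h2
      rwa [h2'] at hm
    obtain ⟨A, n, hA, he⟩ := hmem
    rw [Fin.sum_univ_two] at he
    rcases hA 0 with h0 | h0 <;> rcases hA 1 with h1 | h1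
    · exfalso
      have hle : ell (3 * a) ≤ 2 :=
        ell_le ![3, 3] ![n 0, n 1] (by intro i; fin_cases i <;> norm_num)
          (by simp [Fin.sum_univ_two]; rw [he, h0, h1]; ring)
      omega
    · exfalso
      have hle : ell (3 * a) ≤ 3 :=
        ell_le ![3, 1, 1] ![n 0, n 1 + 3, n 1] (by intro i; fin_cases i <;> norm_num)
          (by simp [Fin.sum_univ_three]; rw [he, h0, h1]; ring)
      omega
    · exfalso
      have hle : ell (3 * a) ≤ 3 :=
        ell_le ![1, 1, 3] ![n 0 + 3, n 0, n 1] (by intro i; fin_cases i <;> norm_num)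
          (by simp [Fin.sum_univ_three]; rw [he, h0, h1]; ring)
      omega
    · refine ⟨n 0, n 1, by rw [he, h0, h1]; ring, ?_⟩
      rcases le_total (n 1) (n 0) with hle | hle
      · obtain ⟨dd, hdd⟩ : ∃ dd, n 0 = n 1 + dd := ⟨n 0 - n 1, by omega⟩
        by_contra habs
        have hdd4 : dd ≤ 4 := by
          rcases abs_cases ((n 0 : ℤ) - (n 1 : ℤ)) with ⟨hc, _⟩ | ⟨hc, _⟩ <;>
            rw [hc] at habs <;> omega
        have h3 : ell (3 * a) ≤ 3 :=
          small_d (n 1) dd hdd4 _ (by rw [he, h0, h1, hdd, pow_add]; ring)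
        omega
      · obtain ⟨dd, hdd⟩ : ∃ dd, n 1 = n 0 + dd := ⟨n 1 - n 0, by omega⟩
        by_contra habs
        have hdd4 : dd ≤ 4 := by
          rcases abs_cases ((n 0 : ℤ) - (n 1 : ℤ)) with ⟨hc, _⟩ | ⟨hc, _⟩ <;>
            rw [hc] at habs <;> omega
        have h3 : ell (3 * a) ≤ 3 :=
          small_d (n 0) dd hdd4 _ (by rw [he, h0, h1, hdd, pow_add]; ring)
        omega
  · rintro ⟨m, p, heq, habs⟩
    rcases le_total p m with hle | hle
    · obtain ⟨dd, hdd⟩ : ∃ dd, m = p + dd := ⟨m - p, by omega⟩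
      have h5 : 5 ≤ dd := by
        rcases abs_cases ((m : ℤ) - (p : ℤ)) with ⟨hc, _⟩ | ⟨hc, _⟩ <;>
          rw [hc] at habs <;> omega
      have hc := core p dd h5
      rw [heq, hdd]
      exact hc
    · obtain ⟨dd, hdd⟩ : ∃ dd, p = m + dd := ⟨p - m, by omega⟩
      have h5 : 5 ≤ dd := by
        rcases abs_cases ((m : ℤ) - (p : ℤ)) with ⟨hc, _⟩ | ⟨hc, _⟩ <;>
          rw [hc] at habs <;> omega
      have hc := core m dd h5
      have heq' : a = 3 * (2 ^ (m + dd) + 2 ^ m) := by rw [heq, hdd]; ring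
      rw [heq']
      exact hc
end
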